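/- For all real constants a₀ > 0, β > 0, and a₂ ∈ ℝ, the function (p, y) ↦ a₀·exp(p + a₂·y)/log(1 + β·exp(p)) is convex on ℝ² (jointly in the pair (p, y)). -/

import Mathlib

/-!
Dividing by `log (1 + β e^p)` is multiplying by `exp (-log log (1 + β e^p))`, so the function is
`a₀ · exp (φ p + a₂ y)` with `φ p = p - log log (1 + β e^p)`, and it suffices that `φ` is convex.
With `L = log (1 + β e^p)` one has `L' = 1 - e^{-L}`, hence `φ' = 1 - (1 - e^{-L}) / L`. Since `L`
increases with `p` and `(1 - e^{-t}) / t` is the slope of the secant of the convex function `exp`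
between `-t` and `0`, which decreases in `t`, `φ'` is monotone.
-/

open Real Set

lemma ConvexOn.exp {E : Type*} [AddCommMonoid E] [Module ℝ E] {s : Set E} {f : E → ℝ}
    (hf : ConvexOn ℝ s f) : ConvexOn ℝ s fun x => Real.exp (f x) :=
  ⟨hf.1, fun _ hx _ hy _ _ ha hb hab =>
    (exp_le_exp.2 (hf.2 hx hy ha hb hab)).trans (convexOn_exp.2 trivial trivial ha hb hab)⟩

lemma antitoneOn_one_sub_exp_neg_div : AntitoneOn (fun t : ℝ => (1 - exp (-t)) / t) {0}ᶜ := by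
  intro s hs t ht hst
  have h := convexOn_exp.secant_mono trivial trivial trivial (neg_ne_zero.2 ht)
    (neg_ne_zero.2 hs) (neg_le_neg hst)
  simpa only [exp_zero, sub_zero, ← neg_sub (1 : ℝ), neg_div_neg_eq] using h

lemma one_lt_one_add_mul_exp {β : ℝ} (hβ : 0 < β) (p : ℝ) : 1 < 1 + β * exp p :=
  lt_add_of_pos_right 1 (by positivity)

lemma hasDerivAt_log_one_add_mul_exp {β : ℝ} (hβ : 0 < β) (p : ℝ) :
    HasDerivAt (fun p => log (1 + β * exp p)) (1 - exp (-log (1 + β * exp p))) p := by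
  convert (((hasDerivAt_exp p).const_mul β).const_add 1).log (by positivity) using 1
  rw [exp_neg, exp_log (by positivity)]
  field_simp
  ring

lemma hasDerivAt_log_log_one_add_mul_exp {β : ℝ} (hβ : 0 < β) (p : ℝ) :
    HasDerivAt (fun p => log (log (1 + β * exp p)))
      ((1 - exp (-log (1 + β * exp p))) / log (1 + β * exp p)) p :=
  (hasDerivAt_log_one_add_mul_exp hβ p).log (log_pos (one_lt_one_add_mul_exp hβ p)).ne'

lemma convexOn_sub_log_log_one_add_mul_exp {β : ℝ} (hβ : 0 < β) :
    ConvexOn ℝ univ fun p => p - log (log (1 + β * exp p)) := by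
  have hderiv (p : ℝ) : HasDerivAt (fun p => p - log (log (1 + β * exp p)))
      (1 - (1 - exp (-log (1 + β * exp p))) / log (1 + β * exp p)) p :=
    (hasDerivAt_id' p).sub (hasDerivAt_log_log_one_add_mul_exp hβ p)
  refine Monotone.convexOn_univ_of_deriv (fun p => (hderiv p).differentiableAt) fun p q hpq => ?_
  have hL (r : ℝ) : 0 < log (1 + β * exp r) := log_pos (one_lt_one_add_mul_exp hβ r)
  have hLpq : log (1 + β * exp p) ≤ log (1 + β * exp q) := by gcongr
  rw [(hderiv p).deriv, (hderiv q).deriv]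
  gcongr 1 - ?_
  exact antitoneOn_one_sub_exp_neg_div (hL p).ne' (hL q).ne' hLpq

/-- Joint convexity of `(p, y) ↦ a₀·e^{p + a₂ y} / log(1 + β e^{p})` on `ℝ²`
(the case `a₁ = 1` in Proposition 2 of the paper). -/
theorem convexOn_exp_add_div_log_one_add_exp (a₀ β a₂ : ℝ) (ha₀ : 0 < a₀) (hβ : 0 < β) :
    ConvexOn ℝ (Set.univ : Set (ℝ × ℝ))
      (fun q : ℝ × ℝ => a₀ * Real.exp (q.1 + a₂ * q.2) / Real.log (1 + β * Real.exp q.1)) := by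
  have hexponent : ConvexOn ℝ univ fun q : ℝ × ℝ =>
      (q.1 - log (log (1 + β * exp q.1))) + a₂ * q.2 :=
    ((convexOn_sub_log_log_one_add_mul_exp hβ).comp_linearMap (LinearMap.fst ℝ ℝ ℝ)).add
      ((a₂ • LinearMap.snd ℝ ℝ ℝ).convexOn convex_univ)
  refine (hexponent.exp.smul ha₀.le).congr fun q _ => ?_
  dsimp only
  rw [smul_eq_mul, sub_add_eq_add_sub, exp_sub, exp_log (log_pos (one_lt_one_add_mul_exp hβ q.1)),
    mul_div_assoc]
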